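/- arXiv:math/9810138 — 6 statements merged into one kernel-verified Lean document; each statement's English description precedes it below -/
import Mathlib

section
/- Suppose ψ₁, φ₁, ψ₂, φ₂ satisfy the Dirac systems ∂ψ₁/∂z = p φ₁, ∂φ₁/∂z̄ = -p̄ ψ₁, ∂ψ₂/∂z = p̄ φ₂, ∂φ₂/∂z̄ = -p ψ₂, and define the map X : ℝ² → ℝ⁴ by the differentials d(X¹+iX²) = -φ₁φ₂ dz + ψ₁ψ₂ dz̄ and d(X³+iX⁴) = φ₁ψ̄₂ dz + ψ₁φ̄₂ dz̄. Then the immersion is conformal: g_{zz} := Σᵢ (∂X^i/∂z)² = 0 and g_{z̄z̄} := Σᵢ (∂X^i/∂z̄)² = 0. -/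
open Complex

/-- Partial derivative in the x-direction. -/
noncomputable def dX (f : ℝ × ℝ → ℂ) (w : ℝ × ℝ) : ℂ := fderiv ℝ f w (1, 0)

/-- Partial derivative in the y-direction. -/
noncomputable def dY (f : ℝ × ℝ → ℂ) (w : ℝ × ℝ) : ℂ := fderiv ℝ f w (0, 1)

/-- Wirtinger derivative ∂/∂z = (∂ₓ - i ∂_y)/2. -/
noncomputable def Wz (f : ℝ × ℝ → ℂ) : ℝ × ℝ → ℂ := fun w => (dX f w - Complex.I * dY f w) / 2

/-- Wirtinger derivative ∂/∂z̄ = (∂ₓ + i ∂_y)/2. -/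
noncomputable def Wzb (f : ℝ × ℝ → ℂ) : ℝ × ℝ → ℂ := fun w => (dX f w + Complex.I * dY f w) / 2

lemma conj_Wz (g : ℝ × ℝ → ℝ) (hg : Differentiable ℝ g) (w : ℝ × ℝ) :
    (starRingEnd ℂ) (Wz (fun v => (g v : ℂ)) w) = Wzb (fun v => (g v : ℂ)) w := by
  have hd : fderiv ℝ (fun v => (g v : ℂ)) w = Complex.ofRealCLM.comp (fderiv ℝ g w) :=
    (Complex.ofRealCLM.hasFDerivAt.comp w (hg w).hasFDerivAt).fderiv
  simp only [Wz, Wzb, dX, dY, hd, ContinuousLinearMap.coe_comp', Function.comp_apply,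
    Complex.ofRealCLM_apply, map_div₀, map_sub, map_mul, Complex.conj_I, Complex.conj_ofReal,
    map_ofNat]
  ring

lemma Wz_comb (f g : ℝ × ℝ → ℂ) (hf : Differentiable ℝ f) (hg : Differentiable ℝ g) (w : ℝ × ℝ) :
    Wz (fun v => f v + Complex.I * g v) w = Wz f w + Complex.I * Wz g w := by
  have hd : fderiv ℝ (fun v => f v + Complex.I * g v) w
      = fderiv ℝ f w + Complex.I • fderiv ℝ g w :=
    ((hf w).hasFDerivAt.add (((hg w).hasFDerivAt).const_smul Complex.I)).fderiv
  simp only [Wz, dX, dY, hd, ContinuousLinearMap.add_apply, ContinuousLinearMap.smul_apply,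
    smul_eq_mul]
  ring

lemma Wzb_comb (f g : ℝ × ℝ → ℂ) (hf : Differentiable ℝ f) (hg : Differentiable ℝ g) (w : ℝ × ℝ) :
    Wzb (fun v => f v + Complex.I * g v) w = Wzb f w + Complex.I * Wzb g w := by
  have hd : fderiv ℝ (fun v => f v + Complex.I * g v) w
      = fderiv ℝ f w + Complex.I • fderiv ℝ g w :=
    ((hf w).hasFDerivAt.add (((hg w).hasFDerivAt).const_smul Complex.I)).fderiv
  simp only [Wzb, dX, dY, hd, ContinuousLinearMap.add_apply, ContinuousLinearMap.smul_apply,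
    smul_eq_mul]
  ring

theorem stmt_1 (ψ₁ φ₁ ψ₂ φ₂ p : ℝ × ℝ → ℂ) (X : Fin 4 → ℝ × ℝ → ℝ)
    (hψ₁ : ContDiff ℝ (⊤ : ℕ∞) ψ₁) (hφ₁ : ContDiff ℝ (⊤ : ℕ∞) φ₁)
    (hψ₂ : ContDiff ℝ (⊤ : ℕ∞) ψ₂) (hφ₂ : ContDiff ℝ (⊤ : ℕ∞) φ₂) (hp : ContDiff ℝ (⊤ : ℕ∞) p)
    (hX : ∀ i, ContDiff ℝ (⊤ : ℕ∞) (X i))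
    (h1 : ∀ w, Wz ψ₁ w = p w * φ₁ w)
    (h2 : ∀ w, Wzb φ₁ w = -(starRingEnd ℂ) (p w) * ψ₁ w)
    (h3 : ∀ w, Wz ψ₂ w = (starRingEnd ℂ) (p w) * φ₂ w)
    (h4 : ∀ w, Wzb φ₂ w = -(p w) * ψ₂ w)
    (hXa : ∀ w, Wz (fun v => (X 0 v : ℂ) + Complex.I * (X 1 v : ℂ)) w = -(φ₁ w * φ₂ w))
    (hXb : ∀ w, Wzb (fun v => (X 0 v : ℂ) + Complex.I * (X 1 v : ℂ)) w = ψ₁ w * ψ₂ w)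
    (hXc : ∀ w, Wz (fun v => (X 2 v : ℂ) + Complex.I * (X 3 v : ℂ)) w
        = φ₁ w * (starRingEnd ℂ) (ψ₂ w))
    (hXd : ∀ w, Wzb (fun v => (X 2 v : ℂ) + Complex.I * (X 3 v : ℂ)) w
        = ψ₁ w * (starRingEnd ℂ) (φ₂ w)) :
    ∀ w, (∑ i : Fin 4, (Wz (fun v => (X i v : ℂ)) w) ^ 2 = 0) ∧
        (∑ i : Fin 4, (Wzb (fun v => (X i v : ℂ)) w) ^ 2 = 0) := by
  intro w
  have hXr : ∀ i, Differentiable ℝ (X i) := fun i => (hX i).differentiable (by simp)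
  have hXc' : ∀ i, Differentiable ℝ (fun v => (X i v : ℂ)) := fun i =>
    Complex.ofRealCLM.differentiable.comp (hXr i)
  -- abbreviations
  set A := Wz (fun v => (X 0 v : ℂ)) w with hA
  set B := Wz (fun v => (X 1 v : ℂ)) w with hB
  set C := Wz (fun v => (X 2 v : ℂ)) w with hC
  set D := Wz (fun v => (X 3 v : ℂ)) w with hD
  have hA' : Wzb (fun v => (X 0 v : ℂ)) w = (starRingEnd ℂ) A := (conj_Wz _ (hXr 0) w).symm
  have hB' : Wzb (fun v => (X 1 v : ℂ)) w = (starRingEnd ℂ) B := (conj_Wz _ (hXr 1) w).symm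
  have hC' : Wzb (fun v => (X 2 v : ℂ)) w = (starRingEnd ℂ) C := (conj_Wz _ (hXr 2) w).symm
  have hD' : Wzb (fun v => (X 3 v : ℂ)) w = (starRingEnd ℂ) D := (conj_Wz _ (hXr 3) w).symm
  have e1 : A + Complex.I * B = -(φ₁ w * φ₂ w) := by
    rw [hA, hB, ← Wz_comb _ _ (hXc' 0) (hXc' 1)]; exact hXa w
  have e2 : (starRingEnd ℂ) A + Complex.I * (starRingEnd ℂ) B = ψ₁ w * ψ₂ w := by
    rw [← hA', ← hB', ← Wzb_comb _ _ (hXc' 0) (hXc' 1)]; exact hXb w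
  have e3 : C + Complex.I * D = φ₁ w * (starRingEnd ℂ) (ψ₂ w) := by
    rw [hC, hD, ← Wz_comb _ _ (hXc' 2) (hXc' 3)]; exact hXc w
  have e4 : (starRingEnd ℂ) C + Complex.I * (starRingEnd ℂ) D = ψ₁ w * (starRingEnd ℂ) (φ₂ w) := by
    rw [← hC', ← hD', ← Wzb_comb _ _ (hXc' 2) (hXc' 3)]; exact hXd w
  -- conjugated versions
  have e2' := congrArg (starRingEnd ℂ) e2
  have e4' := congrArg (starRingEnd ℂ) e4
  have e1' := congrArg (starRingEnd ℂ) e1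
  have e3' := congrArg (starRingEnd ℂ) e3
  simp only [map_add, map_mul, map_neg, Complex.conj_I, Complex.conj_conj, neg_mul] at e1' e2' e3' e4'
  constructor
  · rw [Fin.sum_univ_four]
    linear_combination (A - Complex.I * B) * e1 - (φ₁ w * φ₂ w) * e2' + (C - Complex.I * D) * e3
      + (φ₁ w * (starRingEnd ℂ) (ψ₂ w)) * e4' + (B ^ 2 + D ^ 2) * Complex.I_sq
  · rw [Fin.sum_univ_four, hA', hB', hC', hD']
    linear_combination ((starRingEnd ℂ) A - Complex.I * (starRingEnd ℂ) B) * e2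
      + (ψ₁ w * ψ₂ w) * e1' + ((starRingEnd ℂ) C - Complex.I * (starRingEnd ℂ) D) * e4
      + (ψ₁ w * (starRingEnd ℂ) (φ₂ w)) * e3'
      + ((starRingEnd ℂ) B ^ 2 + (starRingEnd ℂ) D ^ 2) * Complex.I_sq
end

section
/- For a surface in ℝ⁴ given by the generalized Weierstrass representation with Dirac potential p, the squared length of the mean curvature vector H⃗ = (1/g_{zz̄}) X_{zz̄} satisfies H⃗·H⃗ = 4|p|²/(u₁u₂), where u_k = |ψ_k|² + |φ_k|². -/
open Complex

lemma fderiv_conj' (f : ℝ × ℝ → ℂ) (w : ℝ × ℝ) (hf : DifferentiableAt ℝ f w) (v : ℝ × ℝ) :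
    fderiv ℝ (fun x => (starRingEnd ℂ) (f x)) w v = (starRingEnd ℂ) (fderiv ℝ f w v) := by
  have h : (fun x => (starRingEnd ℂ) (f x)) = (Complex.conjCLE : ℂ → ℂ) ∘ f := rfl
  rw [h, fderiv_comp w (Complex.conjCLE.differentiableAt) hf]
  rw [ContinuousLinearEquiv.fderiv]; rfl

lemma diff_conj {f : ℝ × ℝ → ℂ} (hf : Differentiable ℝ f) :
    Differentiable ℝ (fun x => (starRingEnd ℂ) (f x)) :=
  Complex.conjCLE.differentiable.comp hf

lemma Wz_conj (f : ℝ × ℝ → ℂ) (w : ℝ × ℝ) (hf : DifferentiableAt ℝ f w) :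
    Wz (fun x => (starRingEnd ℂ) (f x)) w = (starRingEnd ℂ) (Wzb f w) := by
  simp [Wz, Wzb, dX, dY, fderiv_conj' f w hf, map_add, map_mul, Complex.conj_I, map_ofNat]
  ring

lemma Wzb_conj (f : ℝ × ℝ → ℂ) (w : ℝ × ℝ) (hf : DifferentiableAt ℝ f w) :
    Wzb (fun x => (starRingEnd ℂ) (f x)) w = (starRingEnd ℂ) (Wz f w) := by
  simp [Wz, Wzb, dX, dY, fderiv_conj' f w hf, map_add, map_mul, Complex.conj_I, map_sub,
    map_div₀, map_ofNat]

lemma Wz_add (f g : ℝ × ℝ → ℂ) (w : ℝ × ℝ) (hf : DifferentiableAt ℝ f w)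
    (hg : DifferentiableAt ℝ g w) :
    Wz (fun x => f x + g x) w = Wz f w + Wz g w := by
  simp [Wz, dX, dY, fderiv_fun_add hf hg]; ring

lemma Wzb_add (f g : ℝ × ℝ → ℂ) (w : ℝ × ℝ) (hf : DifferentiableAt ℝ f w)
    (hg : DifferentiableAt ℝ g w) :
    Wzb (fun x => f x + g x) w = Wzb f w + Wzb g w := by
  simp [Wzb, dX, dY, fderiv_fun_add hf hg]; ring

lemma Wz_const_mul (c : ℂ) (f : ℝ × ℝ → ℂ) (w : ℝ × ℝ) (hf : DifferentiableAt ℝ f w) :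
    Wz (fun x => c * f x) w = c * Wz f w := by
  simp [Wz, dX, dY, fderiv_const_mul hf c]; ring

lemma Wzb_const_mul (c : ℂ) (f : ℝ × ℝ → ℂ) (w : ℝ × ℝ) (hf : DifferentiableAt ℝ f w) :
    Wzb (fun x => c * f x) w = c * Wzb f w := by
  simp [Wzb, dX, dY, fderiv_const_mul hf c]; ring

lemma Wz_mul (f g : ℝ × ℝ → ℂ) (w : ℝ × ℝ) (hf : DifferentiableAt ℝ f w)
    (hg : DifferentiableAt ℝ g w) :
    Wz (fun x => f x * g x) w = Wz f w * g w + f w * Wz g w := by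
  simp [Wz, dX, dY, fderiv_fun_mul hf hg]; ring

lemma Wzb_mul (f g : ℝ × ℝ → ℂ) (w : ℝ × ℝ) (hf : DifferentiableAt ℝ f w)
    (hg : DifferentiableAt ℝ g w) :
    Wzb (fun x => f x * g x) w = Wzb f w * g w + f w * Wzb g w := by
  simp [Wzb, dX, dY, fderiv_fun_mul hf hg]; ring

/-- Key computation: second mixed Wirtinger derivative of a real/imaginary combination. -/
lemma key_lemma (a b : ℂ) (Z F G : ℝ × ℝ → ℂ) (hZ : Differentiable ℝ Z)
    (hF : Differentiable ℝ F) (hG : Differentiable ℝ G)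
    (hWzb : ∀ w, Wzb Z w = F w) (hWz : ∀ w, Wz Z w = G w) (w : ℝ × ℝ) :
    Wz (fun v => Wzb (fun v' => a * Z v' + b * (starRingEnd ℂ) (Z v')) v) w
      = a * Wz F w + b * (starRingEnd ℂ) (Wzb G w) := by
  have he : (fun v => Wzb (fun v' => a * Z v' + b * (starRingEnd ℂ) (Z v')) v)
      = fun v => a * F v + b * (starRingEnd ℂ) (G v) := by
    funext v
    rw [Wzb_add _ _ v ((hZ.const_mul a).differentiableAt)
        (((diff_conj hZ).const_mul b).differentiableAt),
      Wzb_const_mul a Z v hZ.differentiableAt,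
      Wzb_const_mul b _ v (diff_conj hZ).differentiableAt,
      Wzb_conj Z v hZ.differentiableAt, hWzb, hWz]
  rw [he, Wz_add _ _ w ((hF.const_mul a).differentiableAt)
      (((diff_conj hG).const_mul b).differentiableAt),
    Wz_const_mul a F w hF.differentiableAt,
    Wz_const_mul b _ w (diff_conj hG).differentiableAt,
    Wz_conj G w hG.differentiableAt]

lemma final_div (u q : ℂ) (hu : u ≠ 0) : u * q / ((1/2 : ℂ) * u)^2 = 4 * q / u := by
  field_simp
  ring


lemma quad (x y c : ℂ) :
    ((1/2*x + 1/2*y)/c)^2 + ((-Complex.I/2*x + Complex.I/2*y)/c)^2 = x*y/c^2 := by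
  have hI := Complex.I_sq
  rw [div_pow, div_pow, ← add_div]
  congr 1
  linear_combination ((y - x)^2/4) * hI

theorem stmt_3 (ψ₁ φ₁ ψ₂ φ₂ p : ℝ × ℝ → ℂ) (X : Fin 4 → ℝ × ℝ → ℝ)
    (hψ₁ : ContDiff ℝ (⊤ : ℕ∞) ψ₁) (hφ₁ : ContDiff ℝ (⊤ : ℕ∞) φ₁)
    (hψ₂ : ContDiff ℝ (⊤ : ℕ∞) ψ₂) (hφ₂ : ContDiff ℝ (⊤ : ℕ∞) φ₂) (hp : ContDiff ℝ (⊤ : ℕ∞) p)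
    (hX : ∀ i, ContDiff ℝ (⊤ : ℕ∞) (X i))
    (h1 : ∀ w, Wz ψ₁ w = p w * φ₁ w)
    (h2 : ∀ w, Wzb φ₁ w = -(starRingEnd ℂ) (p w) * ψ₁ w)
    (h3 : ∀ w, Wz ψ₂ w = (starRingEnd ℂ) (p w) * φ₂ w)
    (h4 : ∀ w, Wzb φ₂ w = -(p w) * ψ₂ w)
    (hXa : ∀ w, Wz (fun v => (X 0 v : ℂ) + Complex.I * (X 1 v : ℂ)) w = -(φ₁ w * φ₂ w))
    (hXb : ∀ w, Wzb (fun v => (X 0 v : ℂ) + Complex.I * (X 1 v : ℂ)) w = ψ₁ w * ψ₂ w)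
    (hXc : ∀ w, Wz (fun v => (X 2 v : ℂ) + Complex.I * (X 3 v : ℂ)) w
        = φ₁ w * (starRingEnd ℂ) (ψ₂ w))
    (hXd : ∀ w, Wzb (fun v => (X 2 v : ℂ) + Complex.I * (X 3 v : ℂ)) w
        = ψ₁ w * (starRingEnd ℂ) (φ₂ w))
    (hne : ∀ w, (Complex.normSq (ψ₁ w) + Complex.normSq (φ₁ w)) *
        (Complex.normSq (ψ₂ w) + Complex.normSq (φ₂ w)) ≠ 0) :
    ∀ w, ∑ i : Fin 4,
        (Wz (fun v => Wzb (fun v' => (X i v' : ℂ)) v) w /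
          ((1 / 2 : ℂ) *
            (((Complex.normSq (ψ₁ w) + Complex.normSq (φ₁ w)) *
              (Complex.normSq (ψ₂ w) + Complex.normSq (φ₂ w)) : ℝ) : ℂ))) ^ 2
      = 4 * (Complex.normSq (p w) : ℂ) /
          (((Complex.normSq (ψ₁ w) + Complex.normSq (φ₁ w)) *
            (Complex.normSq (ψ₂ w) + Complex.normSq (φ₂ w)) : ℝ) : ℂ) := by
  intro w
  have dψ₁ := hψ₁.differentiable (by simp)
  have dφ₁ := hφ₁.differentiable (by simp)
  have dψ₂ := hψ₂.differentiable (by simp)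
  have dφ₂ := hφ₂.differentiable (by simp)
  have dX0 : Differentiable ℝ (fun v => ((X 0 v : ℝ) : ℂ)) :=
    Complex.ofRealCLM.differentiable.comp ((hX 0).differentiable (by simp))
  have dX1 : Differentiable ℝ (fun v => ((X 1 v : ℝ) : ℂ)) :=
    Complex.ofRealCLM.differentiable.comp ((hX 1).differentiable (by simp))
  have dX2 : Differentiable ℝ (fun v => ((X 2 v : ℝ) : ℂ)) :=
    Complex.ofRealCLM.differentiable.comp ((hX 2).differentiable (by simp))
  have dX3 : Differentiable ℝ (fun v => ((X 3 v : ℝ) : ℂ)) :=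
    Complex.ofRealCLM.differentiable.comp ((hX 3).differentiable (by simp))
  have hZ₁ : Differentiable ℝ (fun v => (X 0 v : ℂ) + Complex.I * (X 1 v : ℂ)) :=
    dX0.add (dX1.const_mul Complex.I)
  have hZ₂ : Differentiable ℝ (fun v => (X 2 v : ℂ) + Complex.I * (X 3 v : ℂ)) :=
    dX2.add (dX3.const_mul Complex.I)
  have hF₁ : Differentiable ℝ (fun v => ψ₁ v * ψ₂ v) := dψ₁.mul dψ₂
  have hG₁ : Differentiable ℝ (fun v => -(φ₁ v * φ₂ v)) := (dφ₁.mul dφ₂).neg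
  have hF₂ : Differentiable ℝ (fun v => ψ₁ v * (starRingEnd ℂ) (φ₂ v)) :=
    dψ₁.mul (diff_conj dφ₂)
  have hG₂ : Differentiable ℝ (fun v => φ₁ v * (starRingEnd ℂ) (ψ₂ v)) :=
    dφ₁.mul (diff_conj dψ₂)
  -- values of the first-order derivatives of the auxiliary functions
  have hWzF₁ : Wz (fun v => ψ₁ v * ψ₂ v) w
      = p w * φ₁ w * ψ₂ w + (starRingEnd ℂ) (p w) * (ψ₁ w * φ₂ w) := by
    rw [Wz_mul _ _ w dψ₁.differentiableAt dψ₂.differentiableAt, h1, h3]; ring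
  have hWzbG₁ : Wzb (fun v => -(φ₁ v * φ₂ v)) w
      = p w * φ₁ w * ψ₂ w + (starRingEnd ℂ) (p w) * (ψ₁ w * φ₂ w) := by
    have hneg : (fun v => -(φ₁ v * φ₂ v)) = fun v => (-1 : ℂ) * (φ₁ v * φ₂ v) := by
      funext v; ring
    rw [hneg, Wzb_const_mul _ (fun v => φ₁ v * φ₂ v) w (dφ₁.mul dφ₂).differentiableAt,
      Wzb_mul _ _ w dφ₁.differentiableAt dφ₂.differentiableAt, h2, h4]
    ring
  have hWzF₂ : Wz (fun v => ψ₁ v * (starRingEnd ℂ) (φ₂ v)) w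
      = p w * φ₁ w * (starRingEnd ℂ) (φ₂ w)
        - (starRingEnd ℂ) (p w) * (ψ₁ w * (starRingEnd ℂ) (ψ₂ w)) := by
    rw [Wz_mul _ _ w dψ₁.differentiableAt (diff_conj dφ₂).differentiableAt, h1,
      Wz_conj _ w dφ₂.differentiableAt, h4]
    simp only [map_mul, map_neg]
    ring
  have hWzbG₂ : Wzb (fun v => φ₁ v * (starRingEnd ℂ) (ψ₂ v)) w
      = p w * φ₁ w * (starRingEnd ℂ) (φ₂ w)
        - (starRingEnd ℂ) (p w) * (ψ₁ w * (starRingEnd ℂ) (ψ₂ w)) := by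
    rw [Wzb_mul _ _ w dφ₁.differentiableAt (diff_conj dψ₂).differentiableAt, h2,
      Wzb_conj _ w dψ₂.differentiableAt, h3]
    simp only [map_mul, Complex.conj_conj]
    ring
  -- representations of the coordinates
  have hrep0 : (fun v' => ((X 0 v' : ℝ) : ℂ))
      = fun v' => (1/2 : ℂ) * ((X 0 v' : ℂ) + Complex.I * (X 1 v' : ℂ))
        + (1/2 : ℂ) * (starRingEnd ℂ) ((X 0 v' : ℂ) + Complex.I * (X 1 v' : ℂ)) := by
    funext v'
    simp only [map_add, map_mul, Complex.conj_ofReal, Complex.conj_I]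
    ring
  have hrep1 : (fun v' => ((X 1 v' : ℝ) : ℂ))
      = fun v' => (-Complex.I/2 : ℂ) * ((X 0 v' : ℂ) + Complex.I * (X 1 v' : ℂ))
        + (Complex.I/2 : ℂ) * (starRingEnd ℂ) ((X 0 v' : ℂ) + Complex.I * (X 1 v' : ℂ)) := by
    funext v'
    simp only [map_add, map_mul, Complex.conj_ofReal, Complex.conj_I]
    have hI := Complex.I_sq
    linear_combination ((X 1 v' : ℂ)) * hI
  have hrep2 : (fun v' => ((X 2 v' : ℝ) : ℂ))
      = fun v' => (1/2 : ℂ) * ((X 2 v' : ℂ) + Complex.I * (X 3 v' : ℂ))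
        + (1/2 : ℂ) * (starRingEnd ℂ) ((X 2 v' : ℂ) + Complex.I * (X 3 v' : ℂ)) := by
    funext v'
    simp only [map_add, map_mul, Complex.conj_ofReal, Complex.conj_I]
    ring
  have hrep3 : (fun v' => ((X 3 v' : ℝ) : ℂ))
      = fun v' => (-Complex.I/2 : ℂ) * ((X 2 v' : ℂ) + Complex.I * (X 3 v' : ℂ))
        + (Complex.I/2 : ℂ) * (starRingEnd ℂ) ((X 2 v' : ℂ) + Complex.I * (X 3 v' : ℂ)) := by
    funext v'
    simp only [map_add, map_mul, Complex.conj_ofReal, Complex.conj_I]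
    have hI := Complex.I_sq
    linear_combination ((X 3 v' : ℂ)) * hI
  -- second derivatives of the coordinates
  have E0 : Wz (fun v => Wzb (fun v' => ((X 0 v' : ℝ) : ℂ)) v) w
      = (1/2 : ℂ) * (p w * φ₁ w * ψ₂ w + (starRingEnd ℂ) (p w) * (ψ₁ w * φ₂ w))
        + (1/2 : ℂ) * (starRingEnd ℂ)
            (p w * φ₁ w * ψ₂ w + (starRingEnd ℂ) (p w) * (ψ₁ w * φ₂ w)) := by
    rw [hrep0, key_lemma (1/2) (1/2) _ (fun v => ψ₁ v * ψ₂ v) (fun v => -(φ₁ v * φ₂ v))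
      hZ₁ hF₁ hG₁ hXb hXa w, hWzF₁, hWzbG₁]
  have E1 : Wz (fun v => Wzb (fun v' => ((X 1 v' : ℝ) : ℂ)) v) w
      = (-Complex.I/2 : ℂ) * (p w * φ₁ w * ψ₂ w + (starRingEnd ℂ) (p w) * (ψ₁ w * φ₂ w))
        + (Complex.I/2 : ℂ) * (starRingEnd ℂ)
            (p w * φ₁ w * ψ₂ w + (starRingEnd ℂ) (p w) * (ψ₁ w * φ₂ w)) := by
    rw [hrep1, key_lemma (-Complex.I/2) (Complex.I/2) _ (fun v => ψ₁ v * ψ₂ v)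
      (fun v => -(φ₁ v * φ₂ v)) hZ₁ hF₁ hG₁ hXb hXa w, hWzF₁, hWzbG₁]
  have E2 : Wz (fun v => Wzb (fun v' => ((X 2 v' : ℝ) : ℂ)) v) w
      = (1/2 : ℂ) * (p w * φ₁ w * (starRingEnd ℂ) (φ₂ w)
          - (starRingEnd ℂ) (p w) * (ψ₁ w * (starRingEnd ℂ) (ψ₂ w)))
        + (1/2 : ℂ) * (starRingEnd ℂ) (p w * φ₁ w * (starRingEnd ℂ) (φ₂ w)
          - (starRingEnd ℂ) (p w) * (ψ₁ w * (starRingEnd ℂ) (ψ₂ w))) := by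
    rw [hrep2, key_lemma (1/2) (1/2) _ (fun v => ψ₁ v * (starRingEnd ℂ) (φ₂ v))
      (fun v => φ₁ v * (starRingEnd ℂ) (ψ₂ v)) hZ₂ hF₂ hG₂ hXd hXc w, hWzF₂, hWzbG₂]
  have E3 : Wz (fun v => Wzb (fun v' => ((X 3 v' : ℝ) : ℂ)) v) w
      = (-Complex.I/2 : ℂ) * (p w * φ₁ w * (starRingEnd ℂ) (φ₂ w)
          - (starRingEnd ℂ) (p w) * (ψ₁ w * (starRingEnd ℂ) (ψ₂ w)))
        + (Complex.I/2 : ℂ) * (starRingEnd ℂ) (p w * φ₁ w * (starRingEnd ℂ) (φ₂ w)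
          - (starRingEnd ℂ) (p w) * (ψ₁ w * (starRingEnd ℂ) (ψ₂ w))) := by
    rw [hrep3, key_lemma (-Complex.I/2) (Complex.I/2) _ (fun v => ψ₁ v * (starRingEnd ℂ) (φ₂ v))
      (fun v => φ₁ v * (starRingEnd ℂ) (ψ₂ v)) hZ₂ hF₂ hG₂ hXd hXc w, hWzF₂, hWzbG₂]
  rw [Fin.sum_univ_four]
  rw [E0, E1, E2, E3]
  rw [quad, add_assoc, quad]
  have hAB : (p w * φ₁ w * ψ₂ w + (starRingEnd ℂ) (p w) * (ψ₁ w * φ₂ w))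
        * (starRingEnd ℂ) (p w * φ₁ w * ψ₂ w + (starRingEnd ℂ) (p w) * (ψ₁ w * φ₂ w))
      + (p w * φ₁ w * (starRingEnd ℂ) (φ₂ w)
          - (starRingEnd ℂ) (p w) * (ψ₁ w * (starRingEnd ℂ) (ψ₂ w)))
        * (starRingEnd ℂ) (p w * φ₁ w * (starRingEnd ℂ) (φ₂ w)
          - (starRingEnd ℂ) (p w) * (ψ₁ w * (starRingEnd ℂ) (ψ₂ w)))
      = (((Complex.normSq (ψ₁ w) + Complex.normSq (φ₁ w)) *
          (Complex.normSq (ψ₂ w) + Complex.normSq (φ₂ w)) : ℝ) : ℂ)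
        * (Complex.normSq (p w) : ℂ) := by
    simp only [map_add, map_sub, map_mul, Complex.conj_conj]
    push_cast
    simp only [← Complex.mul_conj]
    ring
  rw [← add_div, hAB]
  have hu : (((Complex.normSq (ψ₁ w) + Complex.normSq (φ₁ w)) *
      (Complex.normSq (ψ₂ w) + Complex.normSq (φ₂ w)) : ℝ) : ℂ) ≠ 0 :=
    Complex.ofReal_ne_zero.mpr (hne w)
  exact final_div _ _ hu
end

section
/- For the ℝ^{2,2} Weierstrass representation (with Dirac systems ∂ψ₁/∂z = pφ₁, ∂φ₁/∂z̄ = p̄ψ₁, ∂ψ₂/∂z = p̄φ₂, ∂φ₂/∂z̄ = pψ₂, and X defined by d(X¹+iX²) = φ₁φ₂ dz + ψ₁ψ₂ dz̄, d(X³+iX⁴) = i(ψ̄₁φ₂ dz + φ̄₁ψ₂ dz̄)), the induced metric in the signature (+,+,-,-) inner product satisfies g_{zz} = g_{z̄z̄} = 0 and g_{zz̄} = (1/2)v₁v₂ with v_α = |ψ_α|² - |φ_α|². -/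
open Complex

lemma diffC {f : ℝ × ℝ → ℝ} (hf : ContDiff ℝ (⊤ : ℕ∞) f) (w : ℝ × ℝ) :
    DifferentiableAt ℝ (fun v => (f v : ℂ)) w :=
  (Complex.ofRealCLM.differentiable.comp (hf.differentiable (by simp))).differentiableAt

lemma fderiv_split {f g : ℝ × ℝ → ℝ} (hf : ContDiff ℝ (⊤ : ℕ∞) f) (hg : ContDiff ℝ (⊤ : ℕ∞) g)
    (w u : ℝ × ℝ) :
    fderiv ℝ (fun v => (f v : ℂ) + Complex.I * (g v : ℂ)) w u
      = fderiv ℝ (fun v => (f v : ℂ)) w u + Complex.I * fderiv ℝ (fun v => (g v : ℂ)) w u := by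
  rw [fderiv_fun_add (diffC hf w) ((diffC hg w).const_mul Complex.I), fderiv_const_mul (diffC hg w)]
  simp

lemma Wz_split {f g : ℝ × ℝ → ℝ} (hf : ContDiff ℝ (⊤ : ℕ∞) f) (hg : ContDiff ℝ (⊤ : ℕ∞) g) (w : ℝ × ℝ) :
    Wz (fun v => (f v : ℂ) + Complex.I * (g v : ℂ)) w
      = Wz (fun v => (f v : ℂ)) w + Complex.I * Wz (fun v => (g v : ℂ)) w := by
  simp only [Wz, dX, dY, fderiv_split hf hg]; ring

lemma Wzb_split {f g : ℝ × ℝ → ℝ} (hf : ContDiff ℝ (⊤ : ℕ∞) f) (hg : ContDiff ℝ (⊤ : ℕ∞) g) (w : ℝ × ℝ) :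
    Wzb (fun v => (f v : ℂ) + Complex.I * (g v : ℂ)) w
      = Wzb (fun v => (f v : ℂ)) w + Complex.I * Wzb (fun v => (g v : ℂ)) w := by
  simp only [Wzb, dX, dY, fderiv_split hf hg]; ring

lemma Wzb_real {f : ℝ × ℝ → ℝ} (hf : ContDiff ℝ (⊤ : ℕ∞) f) (w : ℝ × ℝ) :
    Wzb (fun v => (f v : ℂ)) w = (starRingEnd ℂ) (Wz (fun v => (f v : ℂ)) w) := by
  have hD : fderiv ℝ (fun v => (f v : ℂ)) w = Complex.ofRealCLM.comp (fderiv ℝ f w) :=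
    (Complex.ofRealCLM.hasFDerivAt.comp w ((hf.differentiable (by simp)) w).hasFDerivAt).fderiv
  simp only [Wzb, Wz, dX, dY, hD, ContinuousLinearMap.comp_apply, Complex.ofRealCLM_apply,
    map_div₀, map_add, map_sub, map_mul, Complex.conj_I, Complex.conj_ofReal, map_ofNat]
  ring

theorem stmt_6 (ψ₁ φ₁ ψ₂ φ₂ p : ℝ × ℝ → ℂ) (X : Fin 4 → ℝ × ℝ → ℝ)
    (hψ₁ : ContDiff ℝ (⊤ : ℕ∞) ψ₁) (hφ₁ : ContDiff ℝ (⊤ : ℕ∞) φ₁)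
    (hψ₂ : ContDiff ℝ (⊤ : ℕ∞) ψ₂) (hφ₂ : ContDiff ℝ (⊤ : ℕ∞) φ₂) (hp : ContDiff ℝ (⊤ : ℕ∞) p)
    (hX : ∀ i, ContDiff ℝ (⊤ : ℕ∞) (X i))
    (h1 : ∀ w, Wz ψ₁ w = p w * φ₁ w)
    (h2 : ∀ w, Wzb φ₁ w = (starRingEnd ℂ) (p w) * ψ₁ w)
    (h3 : ∀ w, Wz ψ₂ w = (starRingEnd ℂ) (p w) * φ₂ w)
    (h4 : ∀ w, Wzb φ₂ w = p w * ψ₂ w)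
    (hXa : ∀ w, Wz (fun v => (X 0 v : ℂ) + Complex.I * (X 1 v : ℂ)) w = φ₁ w * φ₂ w)
    (hXb : ∀ w, Wzb (fun v => (X 0 v : ℂ) + Complex.I * (X 1 v : ℂ)) w = ψ₁ w * ψ₂ w)
    (hXc : ∀ w, Wz (fun v => (X 2 v : ℂ) + Complex.I * (X 3 v : ℂ)) w
        = Complex.I * ((starRingEnd ℂ) (ψ₁ w) * φ₂ w))
    (hXd : ∀ w, Wzb (fun v => (X 2 v : ℂ) + Complex.I * (X 3 v : ℂ)) w
        = Complex.I * ((starRingEnd ℂ) (φ₁ w) * ψ₂ w)) :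
    ∀ w, (∑ i : Fin 4, (![1, 1, -1, -1] : Fin 4 → ℂ) i * (Wz (fun v => (X i v : ℂ)) w) ^ 2 = 0) ∧
      (∑ i : Fin 4, (![1, 1, -1, -1] : Fin 4 → ℂ) i * (Wzb (fun v => (X i v : ℂ)) w) ^ 2 = 0) ∧
      (∑ i : Fin 4, (![1, 1, -1, -1] : Fin 4 → ℂ) i *
          (Wz (fun v => (X i v : ℂ)) w * Wzb (fun v => (X i v : ℂ)) w)
        = (1 / 2 : ℂ) *
          (((Complex.normSq (ψ₁ w) - Complex.normSq (φ₁ w)) *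
            (Complex.normSq (ψ₂ w) - Complex.normSq (φ₂ w)) : ℝ) : ℂ)) := by
  intro w
  set a := Wz (fun v => (X 0 v : ℂ)) w with ha
  set b := Wz (fun v => (X 1 v : ℂ)) w with hb
  set c := Wz (fun v => (X 2 v : ℂ)) w with hc
  set d := Wz (fun v => (X 3 v : ℂ)) w with hd
  have E1 : a + Complex.I * b = φ₁ w * φ₂ w := by
    rw [ha, hb, ← Wz_split (hX 0) (hX 1) w]; exact hXa w
  have E2 : (starRingEnd ℂ) a + Complex.I * (starRingEnd ℂ) b = ψ₁ w * ψ₂ w := by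
    rw [ha, hb, ← Wzb_real (hX 0) w, ← Wzb_real (hX 1) w, ← Wzb_split (hX 0) (hX 1) w]
    exact hXb w
  have E3 : c + Complex.I * d = Complex.I * ((starRingEnd ℂ) (ψ₁ w) * φ₂ w) := by
    rw [hc, hd, ← Wz_split (hX 2) (hX 3) w]; exact hXc w
  have E4 : (starRingEnd ℂ) c + Complex.I * (starRingEnd ℂ) d
      = Complex.I * ((starRingEnd ℂ) (φ₁ w) * ψ₂ w) := by
    rw [hc, hd, ← Wzb_real (hX 2) w, ← Wzb_real (hX 3) w, ← Wzb_split (hX 2) (hX 3) w]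
    exact hXd w
  have e2 : a - Complex.I * b = (starRingEnd ℂ) (ψ₁ w) * (starRingEnd ℂ) (ψ₂ w) := by
    have h := congrArg (starRingEnd ℂ) E2
    simp only [map_add, map_mul, Complex.conj_I, Complex.conj_conj] at h
    linear_combination h
  have f2 : (starRingEnd ℂ) a - Complex.I * (starRingEnd ℂ) b
      = (starRingEnd ℂ) (φ₁ w) * (starRingEnd ℂ) (φ₂ w) := by
    have h := congrArg (starRingEnd ℂ) E1
    simp only [map_add, map_mul, Complex.conj_I, Complex.conj_conj] at h
    linear_combination h
  have e4 : c - Complex.I * d = -Complex.I * (φ₁ w * (starRingEnd ℂ) (ψ₂ w)) := by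
    have h := congrArg (starRingEnd ℂ) E4
    simp only [map_add, map_mul, Complex.conj_I, Complex.conj_conj] at h
    linear_combination h
  have f4 : (starRingEnd ℂ) c - Complex.I * (starRingEnd ℂ) d
      = -Complex.I * (ψ₁ w * (starRingEnd ℂ) (φ₂ w)) := by
    have h := congrArg (starRingEnd ℂ) E3
    simp only [map_add, map_mul, Complex.conj_I, Complex.conj_conj] at h
    linear_combination h
  have hw0 := Wzb_real (hX 0) w
  have hw1 := Wzb_real (hX 1) w
  have hw2 := Wzb_real (hX 2) w
  have hw3 := Wzb_real (hX 3) w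
  refine ⟨?_, ?_, ?_⟩
  · simp only [Fin.sum_univ_four, Matrix.cons_val_zero, Matrix.cons_val_one, Matrix.head_cons,
      Matrix.cons_val_two, Matrix.cons_val_three, Matrix.tail_cons, ← ha, ← hb, ← hc, ← hd]
    linear_combination (a - Complex.I * b) * E1 + (φ₁ w * φ₂ w) * e2
      - (c - Complex.I * d) * E3 - (Complex.I * ((starRingEnd ℂ) (ψ₁ w) * φ₂ w)) * e4
      + (b ^ 2 - d ^ 2 + φ₁ w * φ₂ w * (starRingEnd ℂ) (ψ₁ w) * (starRingEnd ℂ) (ψ₂ w))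
        * Complex.I_sq
  · simp only [Fin.sum_univ_four, Matrix.cons_val_zero, Matrix.cons_val_one, Matrix.head_cons,
      Matrix.cons_val_two, Matrix.cons_val_three, Matrix.tail_cons, hw0, hw1, hw2, hw3,
      ← ha, ← hb, ← hc, ← hd]
    linear_combination ((starRingEnd ℂ) a - Complex.I * (starRingEnd ℂ) b) * E2
      + (ψ₁ w * ψ₂ w) * f2
      - ((starRingEnd ℂ) c - Complex.I * (starRingEnd ℂ) d) * E4
      - (Complex.I * ((starRingEnd ℂ) (φ₁ w) * ψ₂ w)) * f4
      + ((starRingEnd ℂ) b ^ 2 - (starRingEnd ℂ) d ^ 2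
          + ψ₁ w * ψ₂ w * (starRingEnd ℂ) (φ₁ w) * (starRingEnd ℂ) (φ₂ w)) * Complex.I_sq
  · simp only [Fin.sum_univ_four, Matrix.cons_val_zero, Matrix.cons_val_one, Matrix.head_cons,
      Matrix.cons_val_two, Matrix.cons_val_three, Matrix.tail_cons, hw0, hw1, hw2, hw3,
      ← ha, ← hb, ← hc, ← hd]
    rw [Complex.ofReal_mul, Complex.ofReal_sub, Complex.ofReal_sub,
      ← Complex.mul_conj, ← Complex.mul_conj, ← Complex.mul_conj, ← Complex.mul_conj]
    linear_combination (1/2 : ℂ) * (((starRingEnd ℂ) a - Complex.I * (starRingEnd ℂ) b) * E1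
        + (φ₁ w * φ₂ w) * f2 + (a - Complex.I * b) * E2 + (ψ₁ w * ψ₂ w) * e2)
      - (1/2 : ℂ) * (((starRingEnd ℂ) c - Complex.I * (starRingEnd ℂ) d) * E3
        + (Complex.I * ((starRingEnd ℂ) (ψ₁ w) * φ₂ w)) * f4
        + (c - Complex.I * d) * E4
        + (Complex.I * ((starRingEnd ℂ) (φ₁ w) * ψ₂ w)) * e4)
      + (b * (starRingEnd ℂ) b - d * (starRingEnd ℂ) d
          + (1/2 : ℂ) * (ψ₁ w * (starRingEnd ℂ) (ψ₁ w) * (φ₂ w * (starRingEnd ℂ) (φ₂ w))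
            + φ₁ w * (starRingEnd ℂ) (φ₁ w) * (ψ₂ w * (starRingEnd ℂ) (ψ₂ w)))) * Complex.I_sq
end

section
/- For the ℝ^{3,1} Weierstrass surface with real potentials p, q, the squared mean curvature satisfies ⟨H⃗, H⃗⟩ = -4pq / |ψ₁φ₂ - ψ₂φ₁|², where H⃗ = (1/g_{zz̄}) X_{zz̄} and ⟨·,·⟩ is the (+,+,+,-) inner product. -/
open Complex

lemma fd_star (g : ℝ × ℝ → ℂ) (w : ℝ × ℝ) (hg : DifferentiableAt ℝ g w) (d : ℝ × ℝ) :
    fderiv ℝ (fun v => (starRingEnd ℂ) (g v)) w d = (starRingEnd ℂ) (fderiv ℝ g w d) := by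
  have h := hg.hasFDerivAt.star.fderiv
  show fderiv ℝ (fun v => star (g v)) w d = _
  rw [h]
  rfl

lemma diff_star (g : ℝ × ℝ → ℂ) (w : ℝ × ℝ) (hg : DifferentiableAt ℝ g w) :
    DifferentiableAt ℝ (fun v => (starRingEnd ℂ) (g v)) w := hg.star

lemma fd_comb (f g : ℝ × ℝ → ℂ) (w : ℝ × ℝ) (hf : DifferentiableAt ℝ f w)
    (hg : DifferentiableAt ℝ g w) (c₁ c₂ : ℂ) (d : ℝ × ℝ) :
    fderiv ℝ (fun v => c₁ * f v + c₂ * (starRingEnd ℂ) (g v)) w d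
      = c₁ * fderiv ℝ f w d + c₂ * (starRingEnd ℂ) (fderiv ℝ g w d) := by
  have hg' := diff_star g w hg
  rw [fderiv_fun_add ((hf.const_mul c₁)) ((hg'.const_mul c₂)), fderiv_const_mul hf,
    fderiv_const_mul hg']
  simp [fd_star g w hg, smul_eq_mul]

lemma fd_mul (f g : ℝ × ℝ → ℂ) (w : ℝ × ℝ) (hf : DifferentiableAt ℝ f w)
    (hg : DifferentiableAt ℝ g w) (d : ℝ × ℝ) :
    fderiv ℝ (fun v => f v * g v) w d = f w * fderiv ℝ g w d + g w * fderiv ℝ f w d := by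
  rw [fderiv_fun_mul hf hg]; simp [smul_eq_mul]

lemma Wz_comb' (F f g : ℝ × ℝ → ℂ) (w : ℝ × ℝ) (hf : DifferentiableAt ℝ f w)
    (hg : DifferentiableAt ℝ g w) (c₁ c₂ : ℂ)
    (hF : ∀ v, F v = c₁ * f v + c₂ * (starRingEnd ℂ) (g v)) :
    Wz F w = c₁ * Wz f w + c₂ * (starRingEnd ℂ) (Wzb g w) := by
  have hFe : F = fun v => c₁ * f v + c₂ * (starRingEnd ℂ) (g v) := funext hF
  rw [hFe]
  simp only [Wz, Wzb, dX, dY, fd_comb f g w hf hg, map_div₀, map_add, map_mul, map_sub,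
    Complex.conj_I, map_ofNat]
  ring

lemma Wzb_comb' (F f g : ℝ × ℝ → ℂ) (w : ℝ × ℝ) (hf : DifferentiableAt ℝ f w)
    (hg : DifferentiableAt ℝ g w) (c₁ c₂ : ℂ)
    (hF : ∀ v, F v = c₁ * f v + c₂ * (starRingEnd ℂ) (g v)) :
    Wzb F w = c₁ * Wzb f w + c₂ * (starRingEnd ℂ) (Wz g w) := by
  have hFe : F = fun v => c₁ * f v + c₂ * (starRingEnd ℂ) (g v) := funext hF
  rw [hFe]
  simp only [Wz, Wzb, dX, dY, fd_comb f g w hf hg, map_div₀, map_add, map_mul, map_sub,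
    Complex.conj_I, map_ofNat]
  ring

lemma Wz_mul_conj (f g : ℝ × ℝ → ℂ) (w : ℝ × ℝ) (hf : DifferentiableAt ℝ f w)
    (hg : DifferentiableAt ℝ g w) :
    Wz (fun v => f v * (starRingEnd ℂ) (g v)) w
      = Wz f w * (starRingEnd ℂ) (g w) + f w * (starRingEnd ℂ) (Wzb g w) := by
  simp only [Wz, Wzb, dX, dY, fd_mul f _ w hf (diff_star g w hg), fd_star g w hg,
    map_div₀, map_add, map_mul, map_sub, Complex.conj_I, map_ofNat]
  ring

lemma Wzb_mul_conj (f g : ℝ × ℝ → ℂ) (w : ℝ × ℝ) (hf : DifferentiableAt ℝ f w)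
    (hg : DifferentiableAt ℝ g w) :
    Wzb (fun v => f v * (starRingEnd ℂ) (g v)) w
      = Wzb f w * (starRingEnd ℂ) (g w) + f w * (starRingEnd ℂ) (Wz g w) := by
  simp only [Wz, Wzb, dX, dY, fd_mul f _ w hf (diff_star g w hg), fd_star g w hg,
    map_div₀, map_add, map_mul, map_sub, Complex.conj_I, map_ofNat]
  ring

lemma Wzb_conj_mul (f g : ℝ × ℝ → ℂ) (w : ℝ × ℝ) (hf : DifferentiableAt ℝ f w)
    (hg : DifferentiableAt ℝ g w) :
    Wzb (fun v => (starRingEnd ℂ) (f v) * g v) w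
      = (starRingEnd ℂ) (Wz f w) * g w + (starRingEnd ℂ) (f w) * Wzb g w := by
  simp only [Wz, Wzb, dX, dY, fd_mul _ g w (diff_star f w hf) hg, fd_star f w hf,
    map_div₀, map_add, map_mul, map_sub, Complex.conj_I, map_ofNat]
  ring

lemma quad_div (x y z u e : ℂ) :
    1 * (x / e) ^ 2 + 1 * (y / e) ^ 2 + 1 * (z / e) ^ 2 + (-1) * (u / e) ^ 2
      = (x ^ 2 + y ^ 2 + z ^ 2 - u ^ 2) / e ^ 2 := by
  rw [div_pow, div_pow, div_pow, div_pow]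
  ring

set_option maxHeartbeats 2000000 in
theorem stmt_9 (ψ₁ φ₁ ψ₂ φ₂ : ℝ × ℝ → ℂ) (p q : ℝ × ℝ → ℝ) (X : Fin 4 → ℝ × ℝ → ℝ)
    (hψ₁ : ContDiff ℝ (⊤ : ℕ∞) ψ₁) (hφ₁ : ContDiff ℝ (⊤ : ℕ∞) φ₁)
    (hψ₂ : ContDiff ℝ (⊤ : ℕ∞) ψ₂) (hφ₂ : ContDiff ℝ (⊤ : ℕ∞) φ₂)
    (hp : ContDiff ℝ (⊤ : ℕ∞) p) (hq : ContDiff ℝ (⊤ : ℕ∞) q)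
    (hX : ∀ i, ContDiff ℝ (⊤ : ℕ∞) (X i))
    (h1 : ∀ w, Wz ψ₁ w = (p w : ℂ) * φ₁ w) (h2 : ∀ w, Wzb φ₁ w = (q w : ℂ) * ψ₁ w)
    (h3 : ∀ w, Wz ψ₂ w = (p w : ℂ) * φ₂ w) (h4 : ∀ w, Wzb φ₂ w = (q w : ℂ) * ψ₂ w)
    (hXa : ∀ w, Wz (fun v => (X 0 v : ℂ) + Complex.I * (X 1 v : ℂ)) w
        = φ₁ w * (starRingEnd ℂ) (ψ₂ w))
    (hXb : ∀ w, Wzb (fun v => (X 0 v : ℂ) + Complex.I * (X 1 v : ℂ)) w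
        = ψ₁ w * (starRingEnd ℂ) (φ₂ w))
    (hXc : ∀ w, Wz (fun v => (X 2 v : ℂ) + (X 3 v : ℂ)) w = (starRingEnd ℂ) (ψ₁ w) * φ₁ w)
    (hXd : ∀ w, Wzb (fun v => (X 2 v : ℂ) + (X 3 v : ℂ)) w = ψ₁ w * (starRingEnd ℂ) (φ₁ w))
    (hXe : ∀ w, Wz (fun v => (X 2 v : ℂ) - (X 3 v : ℂ)) w = -((starRingEnd ℂ) (ψ₂ w) * φ₂ w))
    (hXf : ∀ w, Wzb (fun v => (X 2 v : ℂ) - (X 3 v : ℂ)) w = -(ψ₂ w * (starRingEnd ℂ) (φ₂ w)))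
    (hne : ∀ w, ψ₁ w * φ₂ w - ψ₂ w * φ₁ w ≠ 0) :
    ∀ w, ∑ i : Fin 4, (![1, 1, 1, -1] : Fin 4 → ℂ) i *
        (Wz (fun v => Wzb (fun v' => (X i v' : ℂ)) v) w /
          ((1 / 2 : ℂ) * (Complex.normSq (ψ₁ w * φ₂ w - φ₁ w * ψ₂ w) : ℂ))) ^ 2
      = -4 * (p w : ℂ) * (q w : ℂ) / (Complex.normSq (ψ₁ w * φ₂ w - ψ₂ w * φ₁ w) : ℂ) := by
  intro w
  have dψ₁ := hψ₁.differentiable (by simp)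
  have dφ₁ := hφ₁.differentiable (by simp)
  have dψ₂ := hψ₂.differentiable (by simp)
  have dφ₂ := hφ₂.differentiable (by simp)
  have dXc : ∀ i, Differentiable ℝ (fun v => (X i v : ℂ)) := fun i =>
    Complex.ofRealCLM.differentiable.comp ((hX i).differentiable (by simp))
  have dA : Differentiable ℝ (fun v => (X 0 v : ℂ) + Complex.I * (X 1 v : ℂ)) :=
    (dXc 0).add ((dXc 1).const_mul Complex.I)
  have dC : Differentiable ℝ (fun v => (X 2 v : ℂ) + (X 3 v : ℂ)) := (dXc 2).add (dXc 3)
  have dD : Differentiable ℝ (fun v => (X 2 v : ℂ) - (X 3 v : ℂ)) := (dXc 2).sub (dXc 3)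
  -- inner Wzb computations
  have i0 : ∀ v, Wzb (fun v' => (X 0 v' : ℂ)) v
      = (1/2 : ℂ) * (ψ₁ v * (starRingEnd ℂ) (φ₂ v))
        + (1/2 : ℂ) * (starRingEnd ℂ) (φ₁ v * (starRingEnd ℂ) (ψ₂ v)) := by
    intro v
    rw [Wzb_comb' _ _ _ v (dA v) (dA v) (1/2) (1/2)
      (fun u => by simp [map_add, map_mul, Complex.conj_ofReal, Complex.conj_I]; ring),
      hXb v, hXa v]
  have i1 : ∀ v, Wzb (fun v' => (X 1 v' : ℂ)) v
      = (-Complex.I/2) * (ψ₁ v * (starRingEnd ℂ) (φ₂ v))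
        + (Complex.I/2) * (starRingEnd ℂ) (φ₁ v * (starRingEnd ℂ) (ψ₂ v)) := by
    intro v
    rw [Wzb_comb' _ _ _ v (dA v) (dA v) (-Complex.I/2) (Complex.I/2)
      (fun u => by simp [map_add, map_mul, Complex.conj_ofReal, Complex.conj_I]; linear_combination ((X 1 u : ℝ) : ℂ) * Complex.I_sq),
      hXb v, hXa v]
  have i2 : ∀ v, Wzb (fun v' => (X 2 v' : ℂ)) v
      = (1/2 : ℂ) * (ψ₁ v * (starRingEnd ℂ) (φ₁ v))
        + (1/2 : ℂ) * (starRingEnd ℂ) (-((starRingEnd ℂ) (ψ₂ v) * φ₂ v)) := by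
    intro v
    rw [Wzb_comb' _ _ _ v (dC v) (dD v) (1/2) (1/2)
      (fun u => by simp [map_add, map_sub, Complex.conj_ofReal]; ring),
      hXd v, hXe v]
  have i3 : ∀ v, Wzb (fun v' => (X 3 v' : ℂ)) v
      = (1/2 : ℂ) * (ψ₁ v * (starRingEnd ℂ) (φ₁ v))
        + (-1/2 : ℂ) * (starRingEnd ℂ) (-((starRingEnd ℂ) (ψ₂ v) * φ₂ v)) := by
    intro v
    rw [Wzb_comb' _ _ _ v (dC v) (dD v) (1/2) (-1/2)
      (fun u => by simp [map_add, map_sub, Complex.conj_ofReal]; ring),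
      hXd v, hXe v]
  -- outer Wz computations
  have o0 : Wz (fun v => Wzb (fun v' => (X 0 v' : ℂ)) v) w
      = (1/2 : ℂ) * Wz (fun v => ψ₁ v * (starRingEnd ℂ) (φ₂ v)) w
        + (1/2 : ℂ) * (starRingEnd ℂ) (Wzb (fun v => φ₁ v * (starRingEnd ℂ) (ψ₂ v)) w) :=
    Wz_comb' _ _ _ w ((dψ₁ w).mul (diff_star φ₂ w (dφ₂ w)))
      ((dφ₁ w).mul (diff_star ψ₂ w (dψ₂ w))) _ _ i0
  have o1 : Wz (fun v => Wzb (fun v' => (X 1 v' : ℂ)) v) w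
      = (-Complex.I/2) * Wz (fun v => ψ₁ v * (starRingEnd ℂ) (φ₂ v)) w
        + (Complex.I/2) * (starRingEnd ℂ) (Wzb (fun v => φ₁ v * (starRingEnd ℂ) (ψ₂ v)) w) :=
    Wz_comb' _ _ _ w ((dψ₁ w).mul (diff_star φ₂ w (dφ₂ w)))
      ((dφ₁ w).mul (diff_star ψ₂ w (dψ₂ w))) _ _ i1
  have i2' : ∀ v, Wzb (fun v' => (X 2 v' : ℂ)) v
      = (1/2 : ℂ) * (ψ₁ v * (starRingEnd ℂ) (φ₁ v))
        + (-1/2 : ℂ) * (starRingEnd ℂ) ((starRingEnd ℂ) (ψ₂ v) * φ₂ v) := by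
    intro v; rw [i2 v]; simp [map_mul, map_neg]; ring
  have i3' : ∀ v, Wzb (fun v' => (X 3 v' : ℂ)) v
      = (1/2 : ℂ) * (ψ₁ v * (starRingEnd ℂ) (φ₁ v))
        + (1/2 : ℂ) * (starRingEnd ℂ) ((starRingEnd ℂ) (ψ₂ v) * φ₂ v) := by
    intro v; rw [i3 v]; simp [map_mul, map_neg]; ring
  have o2 : Wz (fun v => Wzb (fun v' => (X 2 v' : ℂ)) v) w
      = (1/2 : ℂ) * Wz (fun v => ψ₁ v * (starRingEnd ℂ) (φ₁ v)) w
        + (-1/2 : ℂ) * (starRingEnd ℂ) (Wzb (fun v => (starRingEnd ℂ) (ψ₂ v) * φ₂ v) w) :=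
    Wz_comb' _ _ _ w ((dψ₁ w).mul (diff_star φ₁ w (dφ₁ w)))
      ((diff_star ψ₂ w (dψ₂ w)).mul (dφ₂ w)) _ _ i2'
  have o3 : Wz (fun v => Wzb (fun v' => (X 3 v' : ℂ)) v) w
      = (1/2 : ℂ) * Wz (fun v => ψ₁ v * (starRingEnd ℂ) (φ₁ v)) w
        + (1/2 : ℂ) * (starRingEnd ℂ) (Wzb (fun v => (starRingEnd ℂ) (ψ₂ v) * φ₂ v) w) :=
    Wz_comb' _ _ _ w ((dψ₁ w).mul (diff_star φ₁ w (dφ₁ w)))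
      ((diff_star ψ₂ w (dψ₂ w)).mul (dφ₂ w)) _ _ i3'
  -- evaluate the first-order pieces
  have m1 : Wz (fun v => ψ₁ v * (starRingEnd ℂ) (φ₂ v)) w
      = (p w : ℂ) * φ₁ w * (starRingEnd ℂ) (φ₂ w)
        + (q w : ℂ) * (ψ₁ w * (starRingEnd ℂ) (ψ₂ w)) := by
    rw [Wz_mul_conj _ _ w (dψ₁ w) (dφ₂ w), h1 w, h4 w]
    simp [map_mul, Complex.conj_ofReal]; ring
  have m2 : Wzb (fun v => φ₁ v * (starRingEnd ℂ) (ψ₂ v)) w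
      = (q w : ℂ) * ψ₁ w * (starRingEnd ℂ) (ψ₂ w)
        + (p w : ℂ) * (φ₁ w * (starRingEnd ℂ) (φ₂ w)) := by
    rw [Wzb_mul_conj _ _ w (dφ₁ w) (dψ₂ w), h2 w, h3 w]
    simp [map_mul, Complex.conj_ofReal]; ring
  have m3 : Wz (fun v => ψ₁ v * (starRingEnd ℂ) (φ₁ v)) w
      = (p w : ℂ) * φ₁ w * (starRingEnd ℂ) (φ₁ w)
        + (q w : ℂ) * (ψ₁ w * (starRingEnd ℂ) (ψ₁ w)) := by
    rw [Wz_mul_conj _ _ w (dψ₁ w) (dφ₁ w), h1 w, h2 w]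
    simp [map_mul, Complex.conj_ofReal]; ring
  have m4 : Wzb (fun v => (starRingEnd ℂ) (ψ₂ v) * φ₂ v) w
      = (p w : ℂ) * ((starRingEnd ℂ) (φ₂ w) * φ₂ w)
        + (q w : ℂ) * ((starRingEnd ℂ) (ψ₂ w) * ψ₂ w) := by
    rw [Wzb_conj_mul _ _ w (dψ₂ w) (dφ₂ w), h3 w, h4 w]
    simp [map_mul, Complex.conj_ofReal]; ring
  have hs := hne w
  have hcs : (starRingEnd ℂ) (ψ₁ w * φ₂ w - ψ₂ w * φ₁ w) ≠ 0 := star_ne_zero.mpr hs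
  have hst : (ψ₁ w * φ₂ w - ψ₂ w * φ₁ w)
      * (starRingEnd ℂ) (ψ₁ w * φ₂ w - ψ₂ w * φ₁ w) ≠ 0 := mul_ne_zero hs hcs
  have hD : ((1/2 : ℂ) * ((ψ₁ w * φ₂ w - ψ₂ w * φ₁ w)
      * (starRingEnd ℂ) (ψ₁ w * φ₂ w - ψ₂ w * φ₁ w))) ≠ 0 :=
    mul_ne_zero (by norm_num) hst
  have hN : ((Complex.normSq (ψ₁ w * φ₂ w - φ₁ w * ψ₂ w) : ℝ) : ℂ)
      = (ψ₁ w * φ₂ w - ψ₂ w * φ₁ w) * (starRingEnd ℂ) (ψ₁ w * φ₂ w - ψ₂ w * φ₁ w) := by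
    rw [mul_comm (φ₁ w) (ψ₂ w)]; exact (Complex.mul_conj _).symm
  have hN' : ((Complex.normSq (ψ₁ w * φ₂ w - ψ₂ w * φ₁ w) : ℝ) : ℂ)
      = (ψ₁ w * φ₂ w - ψ₂ w * φ₁ w) * (starRingEnd ℂ) (ψ₁ w * φ₂ w - ψ₂ w * φ₁ w) :=
    (Complex.mul_conj _).symm
  rw [Fin.sum_univ_four]
  simp only [Matrix.cons_val_zero, Matrix.cons_val_one, Matrix.head_cons, Matrix.cons_val_two,
    Matrix.tail_cons, Matrix.cons_val_three]
  rw [o0, o1, o2, o3, m1, m2, m3, m4, quad_div, hN, hN',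
    div_eq_div_iff (pow_ne_zero 2 hD) hst]
  simp only [map_add, map_mul, map_sub, map_neg, Complex.conj_conj, Complex.conj_ofReal]
  linear_combination ((((q w : ℂ) * (starRingEnd ℂ) (ψ₁ w) * ψ₂ w
      + (p w : ℂ) * (starRingEnd ℂ) (φ₁ w) * φ₂ w)
      - ((p w : ℂ) * φ₁ w * (starRingEnd ℂ) (φ₂ w)
      + (q w : ℂ) * ψ₁ w * (starRingEnd ℂ) (ψ₂ w))) ^ 2 / 4
      * ((ψ₁ w * φ₂ w - ψ₂ w * φ₁ w)
        * ((starRingEnd ℂ) (ψ₁ w) * (starRingEnd ℂ) (φ₂ w)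
          - (starRingEnd ℂ) (ψ₂ w) * (starRingEnd ℂ) (φ₁ w)))) * Complex.I_sq
end

section
/- If ψ, φ solve ∂ψ/∂z = pφ, ∂φ/∂z̄ = pψ with real-valued p and ψ ≠ 0 everywhere, then f := φ/ψ̄ and η := ψ̄² satisfy 2∂f̄/∂z = η H (1 - |f|²)², where H = 2p/(|ψ|² - |φ|²) (assuming |ψ|² ≠ |φ|²); i.e., the generalized Weierstrass representation in ℝ^{2,1} implies the first Kenmotsu-type relation. -/
open Complex

lemma wz_mul (f g : ℝ × ℝ → ℂ) (w : ℝ × ℝ) (hf : DifferentiableAt ℝ f w)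
    (hg : DifferentiableAt ℝ g w) :
    Wz (fun v => f v * g v) w = Wz f w * g w + f w * Wz g w := by
  have hx : dX (fun v => f v * g v) w = f w * dX g w + g w * dX f w := by
    unfold dX; rw [fderiv_fun_mul hf hg]; simp [smul_eq_mul]
  have hy : dY (fun v => f v * g v) w = f w * dY g w + g w * dY f w := by
    unfold dY; rw [fderiv_fun_mul hf hg]; simp [smul_eq_mul]
  unfold Wz; rw [hx, hy]; unfold dX dY; ring

lemma wz_conj (f : ℝ × ℝ → ℂ) (w : ℝ × ℝ) (hf : DifferentiableAt ℝ f w) :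
    Wz (fun v => (starRingEnd ℂ) (f v)) w = (starRingEnd ℂ) (Wzb f w) := by
  have hd : fderiv ℝ (fun v => (starRingEnd ℂ) (f v)) w
      = (Complex.conjCLE : ℂ →L[ℝ] ℂ).comp (fderiv ℝ f w) :=
    ((Complex.conjCLE.toContinuousLinearMap.hasFDerivAt).comp w hf.hasFDerivAt).fderiv
  have hx : dX (fun v => (starRingEnd ℂ) (f v)) w = (starRingEnd ℂ) (dX f w) := by
    unfold dX; rw [hd]; rfl
  have hy : dY (fun v => (starRingEnd ℂ) (f v)) w = (starRingEnd ℂ) (dY f w) := by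
    unfold dY; rw [hd]; rfl
  unfold Wz Wzb; rw [hx, hy]
  simp [map_sub, map_add, map_mul, map_div₀, Complex.conj_I, map_ofNat]
  ring

theorem stmt_13 (ψ φ : ℝ × ℝ → ℂ) (p : ℝ × ℝ → ℝ)
    (hψ : ContDiff ℝ (⊤ : ℕ∞) ψ) (hφ : ContDiff ℝ (⊤ : ℕ∞) φ) (hp : ContDiff ℝ (⊤ : ℕ∞) p)
    (hψ0 : ∀ w, ψ w ≠ 0)
    (hmod : ∀ w, Complex.normSq (ψ w) ≠ Complex.normSq (φ w))
    (h1 : ∀ w, Wz ψ w = (p w : ℂ) * φ w)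
    (h2 : ∀ w, Wzb φ w = (p w : ℂ) * ψ w) :
    ∀ w, 2 * Wz (fun v => (starRingEnd ℂ) (φ v / (starRingEnd ℂ) (ψ v))) w
      = (starRingEnd ℂ) (ψ w) ^ 2 *
        (2 * (p w : ℂ) / ((Complex.normSq (ψ w) - Complex.normSq (φ w) : ℝ) : ℂ)) *
        (1 - (Complex.normSq (φ w / (starRingEnd ℂ) (ψ w)) : ℂ)) ^ 2 := by
  intro w
  have hψd : DifferentiableAt ℝ ψ w := (hψ.differentiable (by simp)).differentiableAt
  have hφd : DifferentiableAt ℝ φ w := (hφ.differentiable (by simp)).differentiableAt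
  have hcφ : DifferentiableAt ℝ (fun v => (starRingEnd ℂ) (φ v)) w :=
    (Complex.conjCLE.differentiable.comp (hφ.differentiable (by simp))).differentiableAt
  have hinv : DifferentiableAt ℝ (fun v => (ψ v)⁻¹) w := hψd.inv (hψ0 w)
  set h : ℝ × ℝ → ℂ := fun v => (starRingEnd ℂ) (φ v) * (ψ v)⁻¹ with hhdef
  have hfun : (fun v => (starRingEnd ℂ) (φ v / (starRingEnd ℂ) (ψ v))) = h := by
    funext v; simp [hhdef, map_div₀, div_eq_mul_inv]
  have hhd : DifferentiableAt ℝ h w := hcφ.mul hinv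
  have hmulfun : (fun v => h v * ψ v) = fun v => (starRingEnd ℂ) (φ v) := by
    funext v
    have := hψ0 v
    simp only [hhdef]
    field_simp
  have key := wz_mul h ψ w hhd hψd
  rw [hmulfun, wz_conj φ w hφd, h2 w, h1 w, map_mul, Complex.conj_ofReal] at key
  -- key : ↑(p w) * conj (ψ w) = Wz h w * ψ w + h w * (↑(p w) * φ w)
  rw [hfun]
  have ha := hψ0 w
  have hca : (starRingEnd ℂ) (ψ w) ≠ 0 := by simpa using ha
  have hD : ((Complex.normSq (ψ w) : ℂ) - (Complex.normSq (φ w) : ℂ)) ≠ 0 := by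
    intro hc
    exact hmod w (by exact_mod_cast sub_eq_zero.mp hc)
  have e1 : (Complex.normSq (ψ w) : ℂ) = ψ w * (starRingEnd ℂ) (ψ w) := (Complex.mul_conj _).symm
  have e2 : (Complex.normSq (φ w) : ℂ) = φ w * (starRingEnd ℂ) (φ w) := (Complex.mul_conj _).symm
  have e3 : (Complex.normSq (φ w / (starRingEnd ℂ) (ψ w)) : ℂ)
      = (φ w * (starRingEnd ℂ) (φ w)) / (ψ w * (starRingEnd ℂ) (ψ w)) := by
    rw [← Complex.mul_conj, map_div₀, Complex.conj_conj, div_mul_div_comm,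
      mul_comm ((starRingEnd ℂ) (ψ w)) (ψ w)]
  have hD' : ψ w * (starRingEnd ℂ) (ψ w) - φ w * (starRingEnd ℂ) (φ w) ≠ 0 := by
    rw [← e1, ← e2]; exact hD
  have key2 : (p w : ℂ) * (starRingEnd ℂ) (ψ w) * ψ w
      = Wz h w * ψ w ^ 2 + (starRingEnd ℂ) (φ w) * ((p w : ℂ) * φ w) := by
    have hw : h w = (starRingEnd ℂ) (φ w) * (ψ w)⁻¹ := rfl
    rw [hw] at key
    linear_combination ψ w * key
      + (starRingEnd ℂ) (φ w) * (p w : ℂ) * φ w * (inv_mul_cancel₀ ha)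
  have eW : Wz h w = (p w : ℂ) * (ψ w * (starRingEnd ℂ) (ψ w)
      - φ w * (starRingEnd ℂ) (φ w)) / ψ w ^ 2 := by
    rw [eq_div_iff (pow_ne_zero 2 ha)]
    linear_combination -key2
  push_cast
  rw [e1, e2, e3, eW]
  field_simp
end

section
/- If ψ, φ satisfy the AKNS time-independent spectral problem with the t₂-flow ψ_t = i(ψ_{ηη} + w₁ψ) + i(p_ξ φ - p φ_ξ), φ_t = -iε(p̄_η ψ - p̄ ψ_η) - i(φ_{ξξ} + w₂φ), compatibility with the Dirac system ψ_ξ = pφ, φ_η = εp̄ψ (reduction q = εp̄, ε = ±1) forces p to satisfy the DS equation p_t = i(p_{ξξ} + p_{ηη} + up) with u = w₁ + w₂, where w₁_ξ = -2ε(|p|²)_η and w₂_η = 2ε(|p|²)_ξ. -/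
open Complex

/-- ∂/∂ξ on functions of (ξ, η, t) ∈ ℝ × ℝ × ℝ. -/
noncomputable def D1 (f : ℝ × ℝ × ℝ → ℂ) (w : ℝ × ℝ × ℝ) : ℂ := fderiv ℝ f w (1, 0, 0)

/-- ∂/∂η. -/
noncomputable def D2 (f : ℝ × ℝ × ℝ → ℂ) (w : ℝ × ℝ × ℝ) : ℂ := fderiv ℝ f w (0, 1, 0)

/-- ∂/∂t. -/
noncomputable def D3 (f : ℝ × ℝ × ℝ → ℂ) (w : ℝ × ℝ × ℝ) : ℂ := fderiv ℝ f w (0, 0, 1)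

lemma D1_def (f : ℝ × ℝ × ℝ → ℂ) : D1 f = fun w => fderiv ℝ f w (1,0,0) := rfl
lemma D2_def (f : ℝ × ℝ × ℝ → ℂ) : D2 f = fun w => fderiv ℝ f w (0,1,0) := rfl
lemma D3_def (f : ℝ × ℝ × ℝ → ℂ) : D3 f = fun w => fderiv ℝ f w (0,0,1) := rfl

lemma Dsm (f : ℝ × ℝ × ℝ → ℂ) (hf : ContDiff ℝ (⊤ : ℕ∞) f) (e : ℝ × ℝ × ℝ) :
    ContDiff ℝ (⊤ : ℕ∞) (fun w => fderiv ℝ f w e) :=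
  (hf.fderiv_right (by simp)).clm_apply contDiff_const

lemma Dmul (f g : ℝ × ℝ × ℝ → ℂ) (v e : ℝ × ℝ × ℝ)
    (hf : DifferentiableAt ℝ f v) (hg : DifferentiableAt ℝ g v) :
    fderiv ℝ (fun w => f w * g w) v e = fderiv ℝ f v e * g v + f v * fderiv ℝ g v e := by
  rw [fderiv_fun_mul hf hg]; simp [smul_eq_mul]; ring

lemma Dcomm (f : ℝ × ℝ × ℝ → ℂ) (hf : ContDiff ℝ (⊤ : ℕ∞) f) (a b v : ℝ × ℝ × ℝ) :
    fderiv ℝ (fun w => fderiv ℝ f w b) v a = fderiv ℝ (fun w => fderiv ℝ f w a) v b := by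
  have hs : IsSymmSndFDerivAt ℝ f v :=
    (hf.of_le (WithTop.coe_le_coe.mpr le_top) : ContDiff ℝ 2 f).contDiffAt.isSymmSndFDerivAt (by norm_num)
  have hd : DifferentiableAt ℝ (fderiv ℝ f) v :=
    ((hf.fderiv_right (m := 1) (WithTop.coe_le_coe.mpr le_top)).differentiable one_ne_zero).differentiableAt
  have h1 : ∀ c : ℝ × ℝ × ℝ, fderiv ℝ (fun w => fderiv ℝ f w c) v
      = (fderiv ℝ (fderiv ℝ f) v).flip c := by
    intro c
    have := fderiv_clm_apply (c := fderiv ℝ f) (u := fun _ => c) hd (differentiableAt_const c)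
    simpa using this
  rw [h1 b, h1 a]
  simp only [ContinuousLinearMap.flip_apply]; exact hs a b

lemma Dadd (f g : ℝ × ℝ × ℝ → ℂ) (v e : ℝ × ℝ × ℝ)
    (hf : DifferentiableAt ℝ f v) (hg : DifferentiableAt ℝ g v) :
    fderiv ℝ (fun w => f w + g w) v e = fderiv ℝ f v e + fderiv ℝ g v e := by
  rw [fderiv_fun_add hf hg]; simp

lemma Dsub (f g : ℝ × ℝ × ℝ → ℂ) (v e : ℝ × ℝ × ℝ)
    (hf : DifferentiableAt ℝ f v) (hg : DifferentiableAt ℝ g v) :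
    fderiv ℝ (fun w => f w - g w) v e = fderiv ℝ f v e - fderiv ℝ g v e := by
  rw [fderiv_fun_sub hf hg]; simp

lemma DCmul (c : ℂ) (f : ℝ × ℝ × ℝ → ℂ) (v e : ℝ × ℝ × ℝ)
    (hf : DifferentiableAt ℝ f v) :
    fderiv ℝ (fun w => c * f w) v e = c * fderiv ℝ f v e := by
  rw [fderiv_const_mul hf]; simp

lemma Dconj (p : ℝ × ℝ × ℝ → ℂ) (hp : ContDiff ℝ (⊤ : ℕ∞) p) :
    ContDiff ℝ (⊤ : ℕ∞) (fun w => (starRingEnd ℂ) (p w)) := by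
  have := (Complex.conjCLE.toContinuousLinearMap.contDiff).comp hp
  simpa [Function.comp_def, Complex.conjCAE_apply] using this

/-- Compatibility of the Dirac system ψ_ξ = pφ, φ_η = εp̄ψ with the DSII t₂-flow,
imposed on all solutions (there is a solution through every value at every point),
forces p to satisfy the Davey–Stewartson equation p_t = i(p_ξξ + p_ηη + (w₁+w₂)p). -/
theorem stmt_19 (p : ℝ × ℝ × ℝ → ℂ) (w₁ w₂ : ℝ × ℝ × ℝ → ℝ) (ε : ℝ)
    (hε : ε = 1 ∨ ε = -1)
    (hpsm : ContDiff ℝ (⊤ : ℕ∞) p)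
    (hw₁sm : ContDiff ℝ (⊤ : ℕ∞) w₁) (hw₂sm : ContDiff ℝ (⊤ : ℕ∞) w₂)
    (hw₁ : ∀ v, D1 (fun v' => ((w₁ v' : ℝ) : ℂ)) v
        = -2 * (ε : ℂ) * D2 (fun v' => ((Complex.normSq (p v') : ℝ) : ℂ)) v)
    (hw₂ : ∀ v, D2 (fun v' => ((w₂ v' : ℝ) : ℂ)) v
        = 2 * (ε : ℂ) * D1 (fun v' => ((Complex.normSq (p v') : ℝ) : ℂ)) v)
    (hSol : ∀ (x : ℝ × ℝ × ℝ) (a b : ℂ), ∃ ψ φ : ℝ × ℝ × ℝ → ℂ,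
        ContDiff ℝ (⊤ : ℕ∞) ψ ∧ ContDiff ℝ (⊤ : ℕ∞) φ ∧
        (∀ v, D1 ψ v = p v * φ v) ∧
        (∀ v, D2 φ v = (ε : ℂ) * (starRingEnd ℂ) (p v) * ψ v) ∧
        (∀ v, D3 ψ v = Complex.I * (D2 (D2 ψ) v + (w₁ v : ℂ) * ψ v)
            + Complex.I * (D1 p v * φ v - p v * D1 φ v)) ∧
        (∀ v, D3 φ v = -Complex.I * (ε : ℂ) *
              ((starRingEnd ℂ) (D2 p v) * ψ v - (starRingEnd ℂ) (p v) * D2 ψ v)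
            - Complex.I * (D1 (D1 φ) v + (w₂ v : ℂ) * φ v)) ∧
        ψ x = a ∧ φ x = b) :
    ∀ v, D3 p v = Complex.I * (D1 (D1 p) v + D2 (D2 p) v + ((w₁ v + w₂ v : ℝ) : ℂ) * p v) := by
  intro v
  obtain ⟨ψ, φ, hψs, hφs, h1, h2, h3, h4, hψv, hφv⟩ := hSol v 0 1
  simp only [D1_def, D2_def, D3_def] at h1 h2 h3 h4 ⊢
  have dA : ∀ (f : ℝ × ℝ × ℝ → ℂ), ContDiff ℝ (⊤ : ℕ∞) f → ∀ w, DifferentiableAt ℝ f w :=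
    fun f hf w => (hf.differentiable (by simp)) w
  have scp : ContDiff ℝ (⊤ : ℕ∞) (fun w => (starRingEnd ℂ) (p w)) := Dconj p hpsm
  have sεcp : ContDiff ℝ (⊤ : ℕ∞) (fun w => (ε : ℂ) * (starRingEnd ℂ) (p w)) :=
    contDiff_const.mul scp
  have sp1 := Dsm p hpsm (1,0,0)
  have sp2 := Dsm p hpsm (0,1,0)
  have sψ2 := Dsm ψ hψs (0,1,0)
  have sφ1 := Dsm φ hφs (1,0,0)
  have sφ2 := Dsm φ hφs (0,1,0)
  have sw₁ : ContDiff ℝ (⊤ : ℕ∞) (fun w => ((w₁ w : ℝ) : ℂ)) :=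
    Complex.ofRealCLM.contDiff.comp hw₁sm
  -- function-level equalities
  have h1f : (fun w => fderiv ℝ ψ w (1,0,0)) = fun w => p w * φ w := funext h1
  have h2f : (fun w => fderiv ℝ φ w (0,1,0))
      = fun w => (ε : ℂ) * (starRingEnd ℂ) (p w) * ψ w := funext h2
  have h3f : (fun w => fderiv ℝ ψ w (0,0,1))
      = fun w => Complex.I * (fderiv ℝ (fun u => fderiv ℝ ψ u (0,1,0)) w (0,1,0)
            + (w₁ w : ℂ) * ψ w)
        + Complex.I * (fderiv ℝ p w (1,0,0) * φ w - p w * fderiv ℝ φ w (1,0,0)) := funext h3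
  -- simple values at v
  have hψ1v : fderiv ℝ ψ v (1,0,0) = p v := by rw [h1 v, hφv, mul_one]
  have hφ2v : fderiv ℝ φ v (0,1,0) = 0 := by rw [h2 v, hψv, mul_zero]
  -- left side: ∂t (ψ_ξ)
  have hL : fderiv ℝ (fun w => fderiv ℝ ψ w (1,0,0)) v (0,0,1)
      = fderiv ℝ p v (0,0,1) + p v * fderiv ℝ φ v (0,0,1) := by
    rw [h1f, Dmul p φ v (0,0,1) (dA p hpsm v) (dA φ hφs v), hφv, mul_one]
  -- commute t and ξ
  have hc : fderiv ℝ (fun w => fderiv ℝ ψ w (1,0,0)) v (0,0,1)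
      = fderiv ℝ (fun w => fderiv ℝ ψ w (0,0,1)) v (1,0,0) :=
    Dcomm ψ hψs (0,0,1) (1,0,0) v
  -- the triple-derivative term X = ∂ξ ψ_ηη
  have hX : fderiv ℝ (fun w => fderiv ℝ (fun u => fderiv ℝ ψ u (0,1,0)) w (0,1,0)) v (1,0,0)
      = fderiv ℝ (fun w => fderiv ℝ p w (0,1,0)) v (0,1,0)
        + p v * ((ε : ℂ) * (starRingEnd ℂ) (p v) * fderiv ℝ ψ v (0,1,0)) := by
    rw [Dcomm (fun u => fderiv ℝ ψ u (0,1,0)) sψ2 (1,0,0) (0,1,0) v]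
    have hinner : (fun w => fderiv ℝ (fun u => fderiv ℝ ψ u (0,1,0)) w (1,0,0))
        = (fun w => fderiv ℝ (fun u => fderiv ℝ ψ u (1,0,0)) w (0,1,0)) :=
      funext fun w => Dcomm ψ hψs (1,0,0) (0,1,0) w
    rw [hinner, h1f]
    have hmulf : (fun w => fderiv ℝ (fun u => p u * φ u) w (0,1,0))
        = fun w => fderiv ℝ p w (0,1,0) * φ w + p w * fderiv ℝ φ w (0,1,0) :=
      funext fun w => Dmul p φ w (0,1,0) (dA p hpsm w) (dA φ hφs w)
    rw [hmulf,
      Dadd (fun w => fderiv ℝ p w (0,1,0) * φ w) (fun w => p w * fderiv ℝ φ w (0,1,0))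
        v (0,1,0) (dA _ (sp2.mul hφs) v) (dA _ (hpsm.mul sφ2) v),
      Dmul (fun w => fderiv ℝ p w (0,1,0)) φ v (0,1,0) (dA _ sp2 v) (dA φ hφs v),
      Dmul p (fun w => fderiv ℝ φ w (0,1,0)) v (0,1,0) (dA p hpsm v) (dA _ sφ2 v)]
    have hφ22 : fderiv ℝ (fun w => fderiv ℝ φ w (0,1,0)) v (0,1,0)
        = (ε : ℂ) * (starRingEnd ℂ) (p v) * fderiv ℝ ψ v (0,1,0) := by
      rw [h2f]
      have := Dmul (fun w => (ε : ℂ) * (starRingEnd ℂ) (p w)) ψ v (0,1,0)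
        (dA _ sεcp v) (dA ψ hψs v)
      rw [show (fun w => (ε : ℂ) * (starRingEnd ℂ) (p w) * ψ w)
          = fun w => ((fun w => (ε : ℂ) * (starRingEnd ℂ) (p w)) w) * ψ w from rfl, this,
        hψv, mul_zero, zero_add]
    rw [hφ22, hφ2v, hφv]
    ring
  -- w₁ term
  have hw1t : fderiv ℝ (fun w => ((w₁ w : ℝ) : ℂ) * ψ w) v (1,0,0)
      = (w₁ v : ℂ) * p v := by
    rw [Dmul (fun w => ((w₁ w : ℝ) : ℂ)) ψ v (1,0,0) (dA _ sw₁ v) (dA ψ hψs v),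
      hψv, mul_zero, zero_add, hψ1v]
  -- right side: ∂ξ (ψ_t)
  have hR : fderiv ℝ (fun w => fderiv ℝ ψ w (0,0,1)) v (1,0,0)
      = Complex.I * (fderiv ℝ (fun w => fderiv ℝ p w (0,1,0)) v (0,1,0)
          + p v * ((ε : ℂ) * (starRingEnd ℂ) (p v) * fderiv ℝ ψ v (0,1,0))
          + (w₁ v : ℂ) * p v)
        + Complex.I * (fderiv ℝ (fun w => fderiv ℝ p w (1,0,0)) v (1,0,0)
          - p v * fderiv ℝ (fun w => fderiv ℝ φ w (1,0,0)) v (1,0,0)) := by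
    rw [h3f]
    have sg : ContDiff ℝ (⊤ : ℕ∞) (fun w => fderiv ℝ (fun u => fderiv ℝ ψ u (0,1,0)) w (0,1,0)
        + (w₁ w : ℂ) * ψ w) := (Dsm _ sψ2 (0,1,0)).add (sw₁.mul hψs)
    have sT2 : ContDiff ℝ (⊤ : ℕ∞) (fun w => fderiv ℝ p w (1,0,0) * φ w
        - p w * fderiv ℝ φ w (1,0,0)) := (sp1.mul hφs).sub (hpsm.mul sφ1)
    rw [Dadd _ _ v (1,0,0) (dA _ (contDiff_const.mul sg) v) (dA _ (contDiff_const.mul sT2) v),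
      DCmul Complex.I _ v (1,0,0) (dA _ sg v),
      DCmul Complex.I _ v (1,0,0) (dA _ sT2 v),
      Dadd _ _ v (1,0,0) (dA _ (Dsm _ sψ2 (0,1,0)) v) (dA _ (sw₁.mul hψs) v),
      Dsub _ _ v (1,0,0) (dA _ (sp1.mul hφs) v) (dA _ (hpsm.mul sφ1) v),
      Dmul (fun w => fderiv ℝ p w (1,0,0)) φ v (1,0,0) (dA _ sp1 v) (dA φ hφs v),
      Dmul p (fun w => fderiv ℝ φ w (1,0,0)) v (1,0,0) (dA p hpsm v) (dA _ sφ1 v),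
      hX, hw1t, hφv]
    ring
  -- assemble
  have h4v := h4 v
  rw [hψv, hφv] at h4v
  have hE := hL.symm.trans (hc.trans hR)
  push_cast
  linear_combination hE - p v * h4v
end
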